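/- For any fixed τ > 0, the marginal Horseshoe density π_HS(β|τ) = ∫₀^∞ N(β|0, λ²τ²)·(2/π)(1+λ²)^{-1} dλ is a regularly varying function of β of index 2 in the sense that the associated tail function is regularly varying of index 1; equivalently, for all c > 0, lim_{β→∞} π_HS(cβ|τ)/π_HS(β|τ) = c^{-2}. -/

import Mathlib

/-!
The substitution `λ = (β / τ) t` gives
`β² π_HS(β|τ) = (2π)^{-1/2} (2/π) τ ∫₀^∞ e^{-1/(2t²)} / (t ((τ/β)² + t²)) dt`.
As `β → ∞` the integrand increases to `e^{-1/(2t²)} t⁻³`, whose integral is `1` (its antiderivative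
is `e^{-1/(2t²)}`), so `β² π_HS(β|τ)` tends to a positive constant; the density is therefore
asymptotic to a constant times `β⁻²`, and `π_HS(cβ|τ) / π_HS(β|τ) → c⁻²`.
-/

open Real Filter Topology Set MeasureTheory

/-- Marginal Horseshoe density
`π_HS(β|τ) = ∫₀^∞ N(β|0, λ²τ²) · C⁺(λ|0,1) dλ`. -/
noncomputable def horseshoePdf (τ β : ℝ) : ℝ :=
  ∫ l in Ioi (0 : ℝ),
    (2 * π * l ^ 2 * τ ^ 2) ^ (-(1 / 2) : ℝ) * Real.exp (-β ^ 2 / (2 * l ^ 2 * τ ^ 2)) *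
      (2 / (π * (1 + l ^ 2)))

theorem tendsto_div_comp_mul_of_tendsto_rpow_mul {f : ℝ → ℝ} {a K c : ℝ} (hK : K ≠ 0)
    (hc : 0 < c) (hf : Tendsto (fun x => x ^ a * f x) atTop (𝓝 K)) :
    Tendsto (fun x => f (c * x) / f x) atTop (𝓝 (c ^ (-a))) := by
  have hcf : Tendsto (fun x => (c * x) ^ a * f (c * x)) atTop (𝓝 K) :=
    hf.comp (tendsto_id.const_mul_atTop hc)
  have hlim := (hcf.div hf hK).const_mul (c ^ (-a))
  rw [div_self hK, mul_one] at hlim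
  refine hlim.congr' ?_
  filter_upwards [eventually_gt_atTop 0] with x hx
  have hxa : 0 < x ^ a := rpow_pos_of_pos hx a
  have hca : c ^ (-a) * c ^ a = 1 := by
    rw [rpow_neg hc.le, inv_mul_cancel₀ (rpow_pos_of_pos hc a).ne']
  calc c ^ (-a) * ((c * x) ^ a * f (c * x) / (x ^ a * f x))
      = c ^ (-a) * c ^ a * (x ^ a * f (c * x)) / (x ^ a * f x) := by
        rw [mul_rpow hc.le hx.le]; ring
    _ = f (c * x) / f x := by rw [hca, one_mul, mul_div_mul_left _ _ hxa.ne']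

theorem hasDerivAt_exp_neg_inv_two_mul_sq {t : ℝ} (ht : t ≠ 0) :
    HasDerivAt (fun s => exp (-(2 * s ^ 2)⁻¹)) (exp (-(2 * t ^ 2)⁻¹) * (t ^ 3)⁻¹) t := by
  have hsq : HasDerivAt (fun s : ℝ => 2 * s ^ 2) (2 * (2 * t)) t := by
    simpa using (hasDerivAt_pow 2 t).const_mul 2
  have hinv : HasDerivAt (fun s : ℝ => -(2 * s ^ 2)⁻¹) (t ^ 3)⁻¹ t := by
    have h : HasDerivAt (fun s : ℝ => -(2 * s ^ 2)⁻¹) (-(-(2 * (2 * t)) / (2 * t ^ 2) ^ 2)) t :=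
      (hsq.inv (by positivity)).neg
    convert h using 1
    field_simp
  exact hinv.exp

theorem integrableOn_and_integral_exp_neg_inv_two_mul_sq_mul_inv_pow_three :
    IntegrableOn (fun t => exp (-(2 * t ^ 2)⁻¹) * (t ^ 3)⁻¹) (Ioi 0) ∧
      ∫ t in Ioi (0 : ℝ), exp (-(2 * t ^ 2)⁻¹) * (t ^ 3)⁻¹ = 1 := by
  -- At `t = 0` the formula `exp (-(2 * t ^ 2)⁻¹)` takes the junk value `1`; the antiderivative
  -- must be its continuous extension by `0`.
  set g : ℝ → ℝ := fun t => expNegInvGlue (2 * t ^ 2)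
  have hcont : ContinuousWithinAt g (Ici 0) 0 :=
    (expNegInvGlue.contDiff (n := 0)).continuous.comp (by fun_prop) |>.continuousWithinAt
  have hderiv : ∀ t ∈ Ioi (0 : ℝ), HasDerivAt g (exp (-(2 * t ^ 2)⁻¹) * (t ^ 3)⁻¹) t := by
    intro t ht
    refine (hasDerivAt_exp_neg_inv_two_mul_sq (ne_of_gt ht)).congr_of_eventuallyEq ?_
    filter_upwards [eventually_gt_nhds ht] with s hs
    simp [g, expNegInvGlue, not_le.mpr (by positivity : (0 : ℝ) < 2 * s ^ 2)]
  have hnonneg : ∀ t ∈ Ioi (0 : ℝ), 0 ≤ exp (-(2 * t ^ 2)⁻¹) * (t ^ 3)⁻¹ :=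
    fun t (ht : 0 < t) => by positivity
  have hlim : Tendsto g atTop (𝓝 1) := by
    have h2 : Tendsto (fun t : ℝ => 2 * t ^ 2) atTop atTop :=
      (tendsto_pow_atTop two_ne_zero).const_mul_atTop two_pos
    have h0 : Tendsto (fun t : ℝ => -(2 * t ^ 2)⁻¹) atTop (𝓝 0) := by
      simpa using h2.inv_tendsto_atTop.neg
    have hexp : Tendsto (fun t : ℝ => exp (-(2 * t ^ 2)⁻¹)) atTop (𝓝 1) := by
      simpa only [Function.comp_def, exp_zero] using (continuous_exp.tendsto 0).comp h0
    refine hexp.congr' ?_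
    filter_upwards [eventually_gt_atTop 0] with t ht
    simp [g, expNegInvGlue, not_le.mpr (by positivity : (0 : ℝ) < 2 * t ^ 2)]
  refine ⟨integrableOn_Ioi_deriv_of_nonneg hcont hderiv hnonneg hlim, ?_⟩
  rw [integral_Ioi_of_hasDerivAt_of_nonneg hcont hderiv hnonneg hlim]
  simp [g]

theorem tendsto_integral_exp_neg_inv_two_mul_sq_mul_inv_mul_add_sq :
    Tendsto (fun ε => ∫ t in Ioi (0 : ℝ), exp (-(2 * t ^ 2)⁻¹) * (t * (ε + t ^ 2))⁻¹)
      (𝓝[≥] 0) (𝓝 1) := by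
  obtain ⟨hint, hval⟩ := integrableOn_and_integral_exp_neg_inv_two_mul_sq_mul_inv_pow_three
  set F : ℝ → ℝ → ℝ := fun ε t => exp (-(2 * t ^ 2)⁻¹) * (t * (ε + t ^ 2))⁻¹
  have hF0 : ∫ t in Ioi (0 : ℝ), F 0 t = 1 := by
    rw [← hval]
    congr! 2 with t
    ring
  rw [← hF0]
  refine continuousWithinAt_of_dominated ?_ ?_ hint ?_
  · exact Eventually.of_forall fun ε => by fun_prop
  · filter_upwards [self_mem_nhdsWithin] with ε (hε : 0 ≤ ε)
    refine (ae_restrict_iff' measurableSet_Ioi).mpr (ae_of_all _ fun t (ht : 0 < t) => ?_)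
    rw [norm_of_nonneg (by positivity)]
    gcongr
    nlinarith [mul_nonneg ht.le hε]
  · refine (ae_restrict_iff' measurableSet_Ioi).mpr (ae_of_all _ fun t (ht : 0 < t) => ?_)
    exact ContinuousAt.continuousWithinAt (by fun_prop (disch := positivity))

theorem sq_mul_horseshoePdf_eq {τ β : ℝ} (hτ : 0 < τ) (hβ : 0 < β) :
    β ^ 2 * horseshoePdf τ β = (√(2 * π))⁻¹ * (2 / π) * τ *
      ∫ t in Ioi (0 : ℝ), exp (-(2 * t ^ 2)⁻¹) * (t * ((τ / β) ^ 2 + t ^ 2))⁻¹ := by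
  have hb : 0 < β / τ := div_pos hβ hτ
  have hsub := integral_comp_mul_left_Ioi' (fun l =>
    (2 * π * l ^ 2 * τ ^ 2) ^ (-(1 / 2) : ℝ) * exp (-β ^ 2 / (2 * l ^ 2 * τ ^ 2)) *
      (2 / (π * (1 + l ^ 2)))) 0 hb
  rw [mul_zero] at hsub
  rw [horseshoePdf, ← hsub, smul_eq_mul, ← mul_assoc, ← integral_const_mul, ← integral_const_mul]
  refine setIntegral_congr_fun measurableSet_Ioi fun t (ht : 0 < t) => ?_
  have hroot : 0 < √(2 * π) * (β * t) := by positivity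
  have hgauss : (2 * π * (β / τ * t) ^ 2 * τ ^ 2) ^ (-(1 / 2) : ℝ) = (√(2 * π) * (β * t))⁻¹ := by
    have hsq : 2 * π * (β / τ * t) ^ 2 * τ ^ 2 = (√(2 * π) * (β * t)) ^ 2 := by
      rw [mul_pow (√(2 * π)), sq_sqrt (by positivity)]
      field_simp
    rw [hsq, rpow_neg (sq_nonneg _), ← sqrt_eq_rpow, sqrt_sq hroot.le]
  have hexp : -β ^ 2 / (2 * (β / τ * t) ^ 2 * τ ^ 2) = -(2 * t ^ 2)⁻¹ := by
    field_simp
  rw [hgauss, hexp]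
  field_simp

theorem tendsto_sq_mul_horseshoePdf {τ : ℝ} (hτ : 0 < τ) :
    Tendsto (fun β => β ^ 2 * horseshoePdf τ β) atTop (𝓝 ((√(2 * π))⁻¹ * (2 / π) * τ)) := by
  have hscale : Tendsto (fun β => (τ / β) ^ 2) atTop (𝓝[≥] 0) := by
    refine tendsto_nhdsWithin_iff.mpr ⟨?_, Eventually.of_forall fun β => mem_Ici.mpr (sq_nonneg _)⟩
    simpa using ((tendsto_const_nhds (x := τ)).div_atTop tendsto_id).pow 2
  have hlim := (tendsto_integral_exp_neg_inv_two_mul_sq_mul_inv_mul_add_sq.comp hscale).const_mul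
    ((√(2 * π))⁻¹ * (2 / π) * τ)
  rw [mul_one] at hlim
  refine hlim.congr' ?_
  filter_upwards [eventually_gt_atTop 0] with β hβ
  rw [Function.comp_apply, sq_mul_horseshoePdf_eq hτ hβ]

/-- For any fixed `τ > 0`, the marginal Horseshoe density is regularly varying of index 2:
`π_HS(cβ|τ)/π_HS(β|τ) → c⁻²` as `β → ∞`, for all `c > 0`. -/
theorem horseshoe_density_regularly_varying (τ : ℝ) (hτ : 0 < τ) :
    ∀ c : ℝ, 0 < c →
      Tendsto (fun β : ℝ => horseshoePdf τ (c * β) / horseshoePdf τ β)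
        atTop (nhds (c ^ (-2 : ℝ))) := by
  intro c hc
  have hlim : Tendsto (fun β => β ^ (2 : ℝ) * horseshoePdf τ β) atTop
      (𝓝 ((√(2 * π))⁻¹ * (2 / π) * τ)) := by
    simpa only [rpow_two] using tendsto_sq_mul_horseshoePdf hτ
  exact tendsto_div_comp_mul_of_tendsto_rpow_mul (by positivity) hc hlim
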